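/- Let B be an even simple Bratteli diagram with full group G=G_B=⋃_n G_n and path space X=X_B, let A⊊X be clopen, and for n≥1 let G°_n(A)=G_n∩G°(A) be the set of elements of G_n fixing A pointwise. Then for every k≥0 and every Borel probability measure μ̄ on X^k invariant under the diagonal action of G, one has lim_{n→∞} (1/|G°_n(A)|) Σ_{g∈G°_n(A)} μ̄(Fix_{X^k}(g)) = μ̄(A^k), and the convergence is monotone. -/

import Mathlib

open MeasureTheory Filter
open scoped ENNReal ComplexOrder

noncomputable section

/-- A Bratteli diagram: vertex levels `V i`, edge levels `E i` (edges from `V i` to `V (i+1)`),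
all levels finite and nonempty, a single root vertex, and source/range maps that are
surjective (every vertex emits and receives an edge). -/
structure BratteliDiagram where
  V : ℕ → Type
  E : ℕ → Type
  fintypeV : ∀ i, Fintype (V i)
  fintypeE : ∀ i, Fintype (E i)
  nonemptyV : ∀ i, Nonempty (V i)
  nonemptyE : ∀ i, Nonempty (E i)
  subsingleton_root : Subsingleton (V 0)
  src : ∀ i, E i → V i
  rng : ∀ i, E i → V (i + 1)
  src_surj : ∀ i, Function.Surjective (src i)
  rng_surj : ∀ i, Function.Surjective (rng i)

namespace BratteliDiagram

variable (B : BratteliDiagram)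

/-- The path space `X_B`: infinite paths starting at the root. -/
def Path : Type :=
  { x : ∀ i, B.E i // ∀ i, B.rng i (x i) = B.src (i + 1) (x (i + 1)) }

instance (i : ℕ) : UniformSpace (B.E i) := ⊥

instance instUniformSpacePath : UniformSpace B.Path :=
  inferInstanceAs (UniformSpace { x : ∀ i, B.E i // ∀ i, B.rng i (x i) = B.src (i + 1) (x (i + 1)) })

instance instMeasurableSpacePath : MeasurableSpace B.Path := borel _

/-- Finite segments of `L+1` consecutive edges starting at level `n`. -/
def Seg (n L : ℕ) : Type :=
  { f : ∀ i : Fin (L + 1), B.E (n + (i : ℕ)) //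
    ∀ (i : ℕ) (hi : i < L),
      B.rng (n + i) (f ⟨i, by omega⟩) = B.src (n + (i + 1)) (f ⟨i + 1, by omega⟩) }

/-- The number of finite paths connecting `v ∈ V n` to `w ∈ V (n + L + 1)`. -/
def numPaths (n L : ℕ) (v : B.V n) (w : B.V (n + L + 1)) : ℕ :=
  Nat.card { f : B.Seg n L //
    B.src n (f.1 ⟨0, by omega⟩) = v ∧ B.rng (n + L) (f.1 ⟨L, by omega⟩) = w }

/-- A Bratteli diagram is simple if every vertex of a given level is connected
to every vertex of some deeper level. -/
def IsSimple : Prop :=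
  ∀ n : ℕ, ∃ L : ℕ, ∀ (v : B.V n) (w : B.V (n + L + 1)), 0 < B.numPaths n L v w

/-- A Bratteli diagram is even if every vertex of a given level is connected to every
vertex of some deeper level by a (positive) even number of paths. -/
def IsEven : Prop :=
  ∀ n : ℕ, ∃ L : ℕ, ∀ (v : B.V n) (w : B.V (n + L + 1)),
    0 < B.numPaths n L v w ∧ Even (B.numPaths n L v w)

/-- A permutation of the path space "of level `n`": it changes only the first `n` edges,
and what it does to the first `n` edges depends only on the first `n` edges. -/
def IsLevel (n : ℕ) (g : Equiv.Perm B.Path) : Prop :=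
  (∀ (x : B.Path) (i : ℕ), n ≤ i → (g x).1 i = x.1 i) ∧
  (∀ x y : B.Path, (∀ i : ℕ, i < n → x.1 i = y.1 i) → ∀ i : ℕ, i < n → (g x).1 i = (g y).1 i)

theorem isLevel_one (n : ℕ) : B.IsLevel n 1 :=
  ⟨fun _ _ _ => rfl, fun _ _ h i hi => h i hi⟩

theorem IsLevel.mul {n : ℕ} {a b : Equiv.Perm B.Path} (ha : B.IsLevel n a)
    (hb : B.IsLevel n b) : B.IsLevel n (a * b) := by
  constructor
  · intro x i hi
    have h1 := ha.1 (b x) i hi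
    have h2 := hb.1 x i hi
    simpa [Equiv.Perm.mul_apply] using h1.trans h2
  · intro x y hxy i hi
    have h2 := hb.2 x y hxy
    have := ha.2 (b x) (b y) h2 i hi
    simpa [Equiv.Perm.mul_apply] using this

theorem IsLevel.mono {n m : ℕ} (hnm : n ≤ m) {g : Equiv.Perm B.Path}
    (h : B.IsLevel n g) : B.IsLevel m g := by
  refine ⟨fun x i hi => h.1 x i (hnm.trans hi), fun x y hxy i hi => ?_⟩
  rcases lt_or_ge i n with h' | h'
  · exact h.2 x y (fun j hj => hxy j (hj.trans_le hnm)) i h'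
  · rw [h.1 x i h', h.1 y i h']
    exact hxy i hi

/-- The group `G_n` of homeomorphisms of the path space permuting only the
first `n` edges of infinite paths. -/
def level (n : ℕ) : Subgroup (Equiv.Perm B.Path) where
  carrier := { g | B.IsLevel n g ∧ B.IsLevel n g⁻¹ }
  one_mem' := ⟨B.isLevel_one n, by simpa using B.isLevel_one n⟩
  mul_mem' := by
    intro a b ha hb
    exact ⟨ha.1.mul B hb.1, by rw [mul_inv_rev]; exact IsLevel.mul B hb.2 ha.2⟩
  inv_mem' := by
    intro a ha
    exact ⟨ha.2, by simpa using ha.1⟩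

theorem level_mono {n m : ℕ} (h : n ≤ m) : B.level n ≤ B.level m := by
  intro g hg
  exact ⟨hg.1.mono B h, hg.2.mono B h⟩

/-- The full group `G_B = ⋃ n, G_n` of the Bratteli diagram. -/
def fullGroup : Subgroup (Equiv.Perm B.Path) where
  carrier := { g | ∃ n, g ∈ B.level n }
  one_mem' := ⟨0, one_mem _⟩
  mul_mem' := by
    rintro a b ⟨n, ha⟩ ⟨m, hb⟩
    exact ⟨max n m, mul_mem (B.level_mono (le_max_left n m) ha)
      (B.level_mono (le_max_right n m) hb)⟩
  inv_mem' := by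
    rintro a ⟨n, ha⟩
    exact ⟨n, inv_mem ha⟩

/-- `G_n` viewed as a subgroup of the full group. -/
def levelIn (n : ℕ) : Subgroup ↥B.fullGroup := (B.level n).comap B.fullGroup.subtype

/-- The subgroup `G°(A)` of elements of the full group fixing `A` pointwise. -/
def Gcirc (A : Set B.Path) : Subgroup ↥B.fullGroup :=
  ⨅ x ∈ A, MulAction.stabilizer ↥B.fullGroup x

/-- `G°_n(A) = G_n ∩ G°(A)`. -/
def GcircN (n : ℕ) (A : Set B.Path) : Subgroup ↥B.fullGroup :=
  B.levelIn n ⊓ B.Gcirc A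

end BratteliDiagram

/-- Conjugation of a subgroup: `g • H = gHg⁻¹`. -/
def conjSub {Γ : Type*} [Group Γ] (g : Γ) (H : Subgroup Γ) : Subgroup Γ :=
  Subgroup.map (MulAut.conj g).toMonoidHom H

/-- The Borel structure on the space `Sub(Γ)` of subgroups of `Γ`,
induced from the product space `{0,1}^Γ` (equivalently `Set Γ`). -/
instance subgroupMeasurableSpace {Γ : Type*} [Group Γ] : MeasurableSpace (Subgroup Γ) :=
  MeasurableSpace.comap (fun H => (H : Set Γ)) inferInstance

namespace BratteliDiagram

variable (B : BratteliDiagram)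

/-- `F(A)`: the collection of subgroups of the full group normalized by `G°(A)`. -/
def FF (A : Set B.Path) : Set (Subgroup ↥B.fullGroup) :=
  { H | ∀ g ∈ B.Gcirc A, conjSub g H = H }

end BratteliDiagram

/-- A measure `ν` on `Y` is invariant under the action of `G`. -/
def MeasInv (G : Type*) [Group G] {Y : Type*} [MeasurableSpace Y] [MulAction G Y]
    (ν : Measure Y) : Prop :=
  ∀ (g : G) (s : Set Y), MeasurableSet s → ν ((fun y => g • y) ⁻¹' s) = ν s

/-- The action of `G` on `(Y, ν)` is ergodic: every invariant measurable set is null or conull. -/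
def MeasErg (G : Type*) [Group G] {Y : Type*} [MeasurableSpace Y] [MulAction G Y]
    (ν : Measure Y) : Prop :=
  ∀ s : Set Y, MeasurableSet s → (∀ g : G, (fun y => g • y) ⁻¹' s = s) → ν s = 0 ∨ ν s = 1

/-- An invariant random subgroup: a conjugation-invariant Borel probability measure on `Sub(G)`. -/
def IsIRS (G : Type*) [Group G] (φ : Measure (Subgroup G)) : Prop :=
  IsProbabilityMeasure φ ∧
    ∀ (g : G) (s : Set (Subgroup G)), MeasurableSet s → φ (conjSub g ⁻¹' s) = φ s

/-- An ergodic invariant random subgroup. -/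
def IsErgodicIRS (G : Type*) [Group G] (φ : Measure (Subgroup G)) : Prop :=
  IsIRS G φ ∧
    ∀ s : Set (Subgroup G), MeasurableSet s → (∀ g : G, conjSub g ⁻¹' s = s) →
      φ s = 0 ∨ φ s = 1

/-- A character of a group: normalized, central, positive semidefinite complex function. -/
def IsCharacter (G : Type*) [Group G] (χ : G → ℂ) : Prop :=
  χ 1 = 1 ∧ (∀ a b : G, χ (a * b) = χ (b * a)) ∧
    ∀ (n : ℕ) (g : Fin n → G) (c : Fin n → ℂ),
      0 ≤ ∑ i, ∑ j, (starRingEnd ℂ) (c i) * c j * χ (g i * (g j)⁻¹)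

namespace BratteliDiagram

variable (B : BratteliDiagram)

/-- The product measure `μ_α = μ_1^{α_1} × ⋯ × μ_k^{α_k}` on `X^{|α|}`,
realized on the index type `Σ i : Fin k, Fin (α i)` (of cardinality `|α| = Σ α i`). -/
def prodMeasure {k : ℕ} (μ : Fin k → Measure B.Path) (α : Fin k → ℕ) :
    Measure ((Σ i : Fin k, Fin (α i)) → B.Path) :=
  Measure.pi fun p => μ p.1

/-- The stabilizer distribution `φ_α` of the diagonal action of the full group
on `(X^{|α|}, μ_α)`. -/
def stabDist {k : ℕ} (μ : Fin k → Measure B.Path) (α : Fin k → ℕ) :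
    Measure (Subgroup ↥B.fullGroup) :=
  Measure.map (fun y => MulAction.stabilizer ↥B.fullGroup y) (B.prodMeasure μ α)

end BratteliDiagram

/-! Averaging the indicators of the fixed point sets over a finite group `H` gives
`|Stab(y)| / |H| = 1 / |H • y|`, so the `n`-th average is `∫ 1 / |G°_n(A) • y| dμ̄(y)`.
Orbits grow with `n`, which gives monotonicity. A tuple in `A^k` is fixed by every `G°_n(A)`.
If instead some coordinate `x` lies outside `A`, its orbits are unbounded: `A` is determined by
the first `m` edges, and since vertices are joined to deeper levels by an even, hence at least
two, number of paths, `x` has arbitrarily many paths agreeing with it on the first `m` edges and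
on a tail; for large `n` each of them is the image of `x` under the swap of two cylinders of
length `n`, an element of `G°_n(A)`. Dominated convergence concludes. -/

open MulAction Topology

section OrbitAverage

variable {H Y : Type*} [Group H] [MulAction H Y]

theorem finite_orbit [Finite H] (y : Y) : (orbit H y).Finite := Set.finite_range _

theorem one_le_ncard_orbit [Finite H] (y : Y) : 1 ≤ (orbit H y).ncard :=
  (Set.ncard_pos (finite_orbit y)).mpr ⟨y, mem_orbit_self y⟩

theorem sum_indicator_fixedBy_eq_card_stabilizer [Fintype H] (y : Y) :
    ∑ g : H, (fixedBy Y g).indicator (1 : Y → ℝ) y = Nat.card (stabilizer H y) := by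
  classical
  simp only [Set.indicator_apply, mem_fixedBy, Pi.one_apply, Finset.sum_boole,
    Nat.card_eq_fintype_card, Fintype.card_subtype, mem_stabilizer_iff]

theorem inv_ncard_orbit_eq_sum_indicator_fixedBy_div [Fintype H] (y : Y) :
    ((orbit H y).ncard : ℝ)⁻¹ =
      (∑ g : H, (fixedBy Y g).indicator (1 : Y → ℝ) y) / Nat.card H := by
  rw [sum_indicator_fixedBy_eq_card_stabilizer, ← (stabilizer H y).card_mul_index,
    index_stabilizer, Nat.cast_mul, div_mul_cancel_left₀ (Nat.cast_ne_zero.mpr Nat.card_pos.ne')]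

theorem ncard_orbit_mono {G : Type*} [Group G] [MulAction G Y] {K L : Subgroup G} [Finite L]
    (hKL : K ≤ L) (y : Y) : (orbit K y).ncard ≤ (orbit L y).ncard :=
  Set.ncard_le_ncard (fun _ ⟨g, hg⟩ => ⟨⟨g, hKL g.2⟩, hg⟩) (finite_orbit y)

theorem antitone_inv_ncard_orbit {G : Type*} [Group G] [MulAction G Y] {K : ℕ → Subgroup G}
    (hK : Monotone K) [∀ n, Finite (K n)] (y : Y) :
    Antitone fun n => ((orbit (K n) y).ncard : ℝ)⁻¹ := fun _ _ h =>
  inv_anti₀ (by exact_mod_cast one_le_ncard_orbit y) (by exact_mod_cast ncard_orbit_mono (hK h) y)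

theorem norm_inv_ncard_orbit_le_one [Finite H] (y : Y) : ‖((orbit H y).ncard : ℝ)⁻¹‖ ≤ 1 := by
  rw [norm_inv, Real.norm_natCast]
  exact inv_le_one_of_one_le₀ (by exact_mod_cast one_le_ncard_orbit y)

variable [MeasurableSpace Y]

theorem measurable_inv_ncard_orbit [Finite H] (hfix : ∀ g : H, MeasurableSet (fixedBy Y g)) :
    Measurable fun y : Y => ((orbit H y).ncard : ℝ)⁻¹ := by
  have := Fintype.ofFinite H
  simp_rw [inv_ncard_orbit_eq_sum_indicator_fixedBy_div]
  exact (Finset.measurable_sum _ fun g _ => measurable_const.indicator (hfix g)).div_const _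

theorem finsum_measure_fixedBy_div_card_eq_integral [Finite H] (μ : Measure Y)
    [IsFiniteMeasure μ] (hfix : ∀ g : H, MeasurableSet (fixedBy Y g)) :
    (∑ᶠ g : H, (μ (fixedBy Y g)).toReal) / Nat.card H =
      ∫ y, ((orbit H y).ncard : ℝ)⁻¹ ∂μ := by
  have := Fintype.ofFinite H
  simp_rw [inv_ncard_orbit_eq_sum_indicator_fixedBy_div]
  rw [integral_div, integral_finsetSum _ fun g _ => (integrable_const 1).indicator (hfix g)]
  simp_rw [integral_indicator_one (hfix _), finsum_eq_sum_of_fintype, measureReal_def]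

end OrbitAverage

namespace BratteliDiagram

variable (B : BratteliDiagram)

instance (i : ℕ) : Finite (B.E i) := @Finite.of_fintype _ (B.fintypeE i)

instance (i : ℕ) : DiscreteTopology (B.E i) := ⟨rfl⟩

instance : BorelSpace B.Path := ⟨rfl⟩

theorem isClosed_setOf_isPath :
    IsClosed {x : ∀ i, B.E i | ∀ i, B.rng i (x i) = B.src (i + 1) (x (i + 1))} := by
  simp only [Set.ofPred_forall]
  exact isClosed_iInter fun i =>
    (isClosed_discrete {p : B.E i × B.E (i + 1) | B.rng i p.1 = B.src (i + 1) p.2}).preimage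
      ((continuous_apply i).prodMk (continuous_apply (i + 1)))

instance : CompactSpace B.Path :=
  isCompact_iff_compactSpace.mp B.isClosed_setOf_isPath.isCompact

variable {B}

def head (n : ℕ) (x : B.Path) : (i : Fin n) → B.E i := fun i => x.1 i

theorem head_eq_head_iff {n : ℕ} {x y : B.Path} :
    head n x = head n y ↔ ∀ i < n, x.1 i = y.1 i :=
  ⟨fun h i hi => congrFun h ⟨i, hi⟩, fun h => funext fun i => h i i.2⟩

theorem continuous_head (n : ℕ) : Continuous (head (B := B) n) :=
  continuous_pi fun i => (continuous_apply (i : ℕ)).comp continuous_subtype_val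

theorem Path.ext_head_tail {n : ℕ} {x y : B.Path} (hhead : head n x = head n y)
    (htail : ∀ i, n ≤ i → x.1 i = y.1 i) : x = y := by
  refine Subtype.ext (funext fun i => ?_)
  rcases lt_or_ge i n with hi | hi
  · exact head_eq_head_iff.mp hhead i hi
  · exact htail i hi

theorem head_eq_head_of_le {m n : ℕ} (hmn : m ≤ n) {x y : B.Path} (h : head n x = head n y) :
    head m x = head m y :=
  head_eq_head_iff.mpr fun i hi => head_eq_head_iff.mp h i (hi.trans_le hmn)

-- Pairs with equal `m`-heads separated by `A` form a decreasing sequence of compact sets with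
-- empty intersection.
theorem _root_.IsClopen.exists_head_determines {A : Set B.Path} (hA : IsClopen A) :
    ∃ m, ∀ u v : B.Path, head m u = head m v → (u ∈ A ↔ v ∈ A) := by
  let D : ℕ → Set (B.Path × B.Path) := fun m => {p | head m p.1 = head m p.2 ∧ p.1 ∈ A ∧ p.2 ∉ A}
  have hD_closed : ∀ m, IsClosed (D m) := fun m =>
    (isClosed_eq ((continuous_head m).comp continuous_fst)
      ((continuous_head m).comp continuous_snd)).inter
      ((hA.isClosed.preimage continuous_fst).inter
        (hA.isOpen.isClosed_compl.preimage continuous_snd))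
  have hD_anti : Antitone D := fun m n hmn p hp => ⟨head_eq_head_of_le hmn hp.1, hp.2⟩
  have hD_empty : Set.univ ∩ ⋂ m, D m = ∅ := by
    refine Set.eq_empty_iff_forall_notMem.mpr fun ⟨u, v⟩ ⟨_, huv⟩ => ?_
    simp only [Set.mem_iInter, D, Set.mem_ofPred_eq] at huv
    have : u = v := Path.ext_head_tail (n := 0) (Subsingleton.elim _ _) fun i _ =>
      head_eq_head_iff.mp (huv (i + 1)).1 i (Nat.lt_succ_self i)
    exact (huv 0).2.2 (this ▸ (huv 0).2.1)
  obtain ⟨m, hm⟩ := isCompact_univ.elim_directed_family_closed D hD_closed hD_empty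
    hD_anti.directed_ge
  have hsep : ∀ u v : B.Path, head m u = head m v → u ∈ A → v ∈ A := fun u v huv hu => by
    by_contra hv
    exact hm.subset ⟨Set.mem_univ (u, v), huv, hu, hv⟩
  exact ⟨m, fun u v huv => ⟨hsep u v huv, hsep v u huv.symm⟩⟩

theorem IsLevel.apply_of_le {n : ℕ} {g : Equiv.Perm B.Path} (hg : B.IsLevel n g) (x : B.Path)
    {i : ℕ} (hi : n ≤ i) : (g x).1 i = x.1 i :=
  hg.1 x i hi

theorem IsLevel.head_eq {n : ℕ} {g : Equiv.Perm B.Path} (hg : B.IsLevel n g) {x y : B.Path}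
    (hxy : head n x = head n y) : head n (g x) = head n (g y) :=
  head_eq_head_iff.mpr (hg.2 x y (head_eq_head_iff.mp hxy))

theorem IsLevel.of_head_eq {n : ℕ} {g : Equiv.Perm B.Path}
    (htail : ∀ x i, n ≤ i → (g x).1 i = x.1 i)
    (hhead : ∀ x y, head n x = head n y → head n (g x) = head n (g y)) : B.IsLevel n g :=
  ⟨htail, fun x y hxy => head_eq_head_iff.mp (hhead x y (head_eq_head_iff.mpr hxy))⟩

-- An element of `G_n` is determined by what it does to the heads of length `n`.
instance (n : ℕ) : Finite (B.level n) := by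
  refine Finite.of_injective (fun g (h : Set.range (head (B := B) n)) =>
    head n (g.1 (Set.rangeSplitting (head n) h))) fun g g' hgg' =>
      Subtype.ext (Equiv.ext fun x => ?_)
  have hx := Set.apply_rangeSplitting (head n) ⟨head n x, Set.mem_range_self x⟩
  refine Path.ext_head_tail (n := n) ?_ fun i hi =>
    (g.2.1.apply_of_le x hi).trans (g'.2.1.apply_of_le x hi).symm
  calc head n (g.1 x) = head n (g.1 (Set.rangeSplitting (head n) ⟨head n x, _⟩)) :=
        g.2.1.head_eq hx.symm
    _ = head n (g'.1 (Set.rangeSplitting (head n) ⟨head n x, _⟩)) := congrFun hgg' _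
    _ = head n (g'.1 x) := g'.2.1.head_eq hx

theorem mem_GcircN_iff {n : ℕ} {A : Set B.Path} {g : B.fullGroup} :
    g ∈ B.GcircN n A ↔ g.1 ∈ B.level n ∧ ∀ a ∈ A, g • a = a := by
  simp [GcircN, levelIn, Gcirc, Subgroup.mem_subgroupOf, Subgroup.mem_iInf,
    mem_stabilizer_iff]

instance (n : ℕ) (A : Set B.Path) : Finite (B.GcircN n A) :=
  Finite.of_injective (fun g => (⟨g.1.1, (mem_GcircN_iff.mp g.2).1⟩ : B.level n))
    fun _ _ h => Subtype.ext <| Subtype.ext <| congrArg (fun g : B.level n => g.1) h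

theorem GcircN_mono (A : Set B.Path) : Monotone fun n => B.GcircN n A :=
  fun _ _ hmn => inf_le_inf (Subgroup.comap_mono (B.level_mono hmn)) le_rfl

theorem isOpen_fixedBy (g : B.fullGroup) : IsOpen (fixedBy B.Path g) := by
  obtain ⟨n, hn⟩ := g.2
  refine isOpen_iff_forall_mem_open.mpr fun x hx => ⟨{z | head n z = head n x}, fun z hz => ?_,
    (isOpen_discrete {head n x}).preimage (continuous_head n), rfl⟩
  have hgx : g.1 x = x := hx
  exact Path.ext_head_tail (n := n)
    (((hn.1.head_eq hz).trans (congrArg (head n) hgx)).trans hz.symm)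
    fun i hi => hn.1.apply_of_le z hi

theorem measurableSet_fixedBy_pi {k : ℕ} (g : B.fullGroup) :
    MeasurableSet (fixedBy (Fin k → B.Path) g) := by
  have : fixedBy (Fin k → B.Path) g =
      ⋂ i, (fun y : Fin k → B.Path => y i) ⁻¹' fixedBy B.Path g := by
    ext y
    simp [funext_iff]
  rw [this]
  exact .iInter fun i => measurable_pi_apply i (isOpen_fixedBy g).measurableSet

theorem src_eq_of_head_eq {n : ℕ} {x y : B.Path} (h : head n x = head n y) :
    B.src n (x.1 n) = B.src n (y.1 n) := by
  cases n with
  | zero => exact B.subsingleton_root.elim _ _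
  | succ i => rw [← x.2 i, ← y.2 i, head_eq_head_iff.mp h i (Nat.lt_succ_self i)]

def glue (n : ℕ) (x z : B.Path) (h : B.src n (x.1 n) = B.src n (z.1 n)) : B.Path :=
  ⟨fun i => if i < n then x.1 i else z.1 i, fun i => by
    dsimp only
    split_ifs with hi hi'
    · exact x.2 i
    · obtain rfl : n = i + 1 := by omega
      exact (x.2 i).trans h
    · omega
    · exact z.2 i⟩

section Glue

variable {n : ℕ} {x z : B.Path} (h : B.src n (x.1 n) = B.src n (z.1 n))

theorem head_glue : head n (glue n x z h) = head n x :=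
  funext fun i => if_pos i.2

theorem glue_apply_of_le {i : ℕ} (hi : n ≤ i) : (glue n x z h).1 i = z.1 i :=
  if_neg (not_lt.mpr hi)

end Glue

section CylinderSwap

open scoped Classical

variable {n : ℕ} {x y : B.Path}

def swapRep (n : ℕ) (x y z : B.Path) : B.Path :=
  if head n z = head n x then y else if head n z = head n y then x else z

theorem head_swapRep (z : B.Path) :
    head n (swapRep n x y z) = Equiv.swap (head n x) (head n y) (head n z) := by
  unfold swapRep
  rw [Equiv.swap_apply_def]
  split_ifs <;> rfl

theorem src_swapRep (hxy : B.src n (x.1 n) = B.src n (y.1 n)) (z : B.Path) :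
    B.src n ((swapRep n x y z).1 n) = B.src n (z.1 n) := by
  unfold swapRep
  split_ifs with hx hy
  · exact hxy.symm.trans (src_eq_of_head_eq hx).symm
  · exact hxy.trans (src_eq_of_head_eq hy).symm
  · rfl

variable (hxy : B.src n (x.1 n) = B.src n (y.1 n))

def cylSwapFun (z : B.Path) : B.Path := glue n (swapRep n x y z) z (src_swapRep hxy z)

theorem head_cylSwapFun (z : B.Path) :
    head n (cylSwapFun hxy z) = Equiv.swap (head n x) (head n y) (head n z) :=
  (head_glue _).trans (head_swapRep z)

theorem cylSwapFun_apply_of_le (z : B.Path) {i : ℕ} (hi : n ≤ i) :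
    (cylSwapFun hxy z).1 i = z.1 i :=
  glue_apply_of_le _ hi

theorem cylSwapFun_involutive : Function.Involutive (cylSwapFun hxy) := fun z =>
  Path.ext_head_tail (by rw [head_cylSwapFun, head_cylSwapFun, Equiv.swap_apply_self])
    fun _ hi => by rw [cylSwapFun_apply_of_le hxy _ hi, cylSwapFun_apply_of_le hxy _ hi]

def cylSwap : Equiv.Perm B.Path := (cylSwapFun_involutive hxy).toPerm

theorem cylSwap_isLevel : B.IsLevel n (cylSwap hxy) :=
  IsLevel.of_head_eq (fun z _ hi => cylSwapFun_apply_of_le hxy z hi) fun z w hzw => by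
    simp only [cylSwap, Function.Involutive.coe_toPerm, head_cylSwapFun, hzw]

theorem cylSwap_mem_level : cylSwap hxy ∈ B.level n := by
  refine ⟨cylSwap_isLevel hxy, ?_⟩
  rw [Equiv.Perm.inv_def, cylSwap, Function.Involutive.toPerm_symm]
  exact cylSwap_isLevel hxy

theorem cylSwap_apply_left (htail : ∀ i, n ≤ i → x.1 i = y.1 i) : cylSwap hxy x = y :=
  Path.ext_head_tail (n := n) ((head_cylSwapFun hxy x).trans (Equiv.swap_apply_left _ _))
    fun i hi => (cylSwapFun_apply_of_le hxy x hi).trans (htail i hi)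

theorem cylSwap_apply_of_ne {z : B.Path} (hzx : head n z ≠ head n x) (hzy : head n z ≠ head n y) :
    cylSwap hxy z = z :=
  Path.ext_head_tail (n := n) ((head_cylSwapFun hxy z).trans (Equiv.swap_apply_of_ne_of_ne hzx hzy))
    fun _ hi => cylSwapFun_apply_of_le hxy z hi

end CylinderSwap

section Splice

variable {m L : ℕ}

def spliceFun (x : B.Path) (s : B.Seg m L) (i : ℕ) : B.E i :=
  if h : m ≤ i ∧ i ≤ m + L then
    cast (congrArg B.E (Nat.add_sub_cancel' h.1)) (s.1 ⟨i - m, by omega⟩)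
  else x.1 i

theorem spliceFun_of_lt (x : B.Path) (s : B.Seg m L) {i : ℕ} (hi : i < m) :
    spliceFun x s i = x.1 i :=
  dif_neg (by omega)

theorem spliceFun_of_gt (x : B.Path) (s : B.Seg m L) {i : ℕ} (hi : m + L < i) :
    spliceFun x s i = x.1 i :=
  dif_neg (by omega)

theorem spliceFun_add (x : B.Path) (s : B.Seg m L) {j : ℕ} (hj : j ≤ L) :
    spliceFun x s (m + j) = s.1 ⟨j, by omega⟩ := by
  rw [spliceFun, dif_pos (by omega), cast_eq_iff_heq]
  exact congr_arg_heq s.1 (Fin.ext (by simp))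

def splice (x : B.Path) (s : B.Seg m L) (h₀ : B.src m (s.1 ⟨0, by omega⟩) = B.src m (x.1 m))
    (h₁ : B.rng (m + L) (s.1 ⟨L, by omega⟩) = B.rng (m + L) (x.1 (m + L))) : B.Path :=
  ⟨spliceFun x s, fun i => by
    rcases lt_or_ge (i + 1) m with hi | hi
    · rw [spliceFun_of_lt x s hi, spliceFun_of_lt x s (by omega)]
      exact x.2 i
    rcases hi.eq_or_lt with rfl | hi
    · rw [spliceFun_of_lt x s (Nat.lt_succ_self i)]
      exact (x.2 i).trans (h₀.symm.trans (congrArg _ (spliceFun_add x s (Nat.zero_le L)).symm))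
    obtain ⟨j, rfl⟩ : ∃ j, i = m + j := ⟨i - m, by omega⟩
    rcases lt_trichotomy j L with hj | rfl | hj
    · rw [spliceFun_add x s hj.le]
      exact (s.2 j hj).trans (congrArg _ (spliceFun_add x s hj).symm)
    · rw [spliceFun_add x s le_rfl, spliceFun_of_gt x s (by omega), h₁]
      exact x.2 (m + j)
    · rw [spliceFun_of_gt x s (by omega), spliceFun_of_gt x s (by omega)]
      exact x.2 (m + j)⟩

end Splice

def tailClass (m n : ℕ) (x : B.Path) : Set B.Path :=
  {y | head m y = head m x ∧ ∀ i, n ≤ i → y.1 i = x.1 i}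

theorem mem_tailClass_self (m n : ℕ) (x : B.Path) : x ∈ tailClass m n x :=
  ⟨rfl, fun _ _ => rfl⟩

theorem tailClass_mono {m n n' : ℕ} (h : n ≤ n') (x : B.Path) :
    tailClass m n x ⊆ tailClass m n' x :=
  fun _ hy => ⟨hy.1, fun i hi => hy.2 i (h.trans hi)⟩

theorem tailClass_subset_of_mem {m n : ℕ} (hmn : m ≤ n) {x y : B.Path} (hy : y ∈ tailClass m n x)
    (n' : ℕ) : tailClass n n' y ⊆ tailClass m (max n n') x :=
  fun _ hz => ⟨(head_eq_head_of_le hmn hz.1).trans hy.1,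
    fun i hi => (hz.2 i (le_of_max_le_right hi)).trans (hy.2 i (le_of_max_le_left hi))⟩

-- Evenness gives a second segment between the vertices of `x` at levels `m` and `m + L + 1`.
theorem exists_ne_mem_tailClass (heven : B.IsEven) (m : ℕ) (x : B.Path) :
    ∃ n, m ≤ n ∧ ∃ y ∈ tailClass m n x, y ≠ x := by
  obtain ⟨L, hL⟩ := heven m
  obtain ⟨hpos, heven_m⟩ := hL (B.src m (x.1 m)) (B.rng (m + L) (x.1 (m + L)))
  have hgt : 1 < B.numPaths m L (B.src m (x.1 m)) (B.rng (m + L) (x.1 (m + L))) := by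
    obtain ⟨c, hc⟩ := heven_m
    omega
  have := Nat.finite_of_card_ne_zero hpos.ne'
  have hnt := Finite.one_lt_card_iff_nontrivial.mp hgt
  obtain ⟨s, hs⟩ := @exists_ne _ hnt ⟨⟨fun i => x.1 (m + i), fun i _ => x.2 (m + i)⟩, rfl, rfl⟩
  obtain ⟨j, hj⟩ : ∃ j : Fin (L + 1), s.1.1 j ≠ x.1 (m + j) := by
    by_contra! h
    exact hs (Subtype.ext (Subtype.ext (funext h)))
  refine ⟨m + L + 1, by omega, splice x s.1 s.2.1 s.2.2,
    ⟨head_eq_head_iff.mpr fun i hi => spliceFun_of_lt x s.1 hi,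
      fun i hi => spliceFun_of_gt x s.1 (by omega)⟩, fun h => hj ?_⟩
  rw [← spliceFun_add x s.1 (Nat.lt_succ_iff.mp j.2)]
  exact congrArg (fun y : B.Path => y.1 (m + j)) h

theorem exists_finset_subset_tailClass (heven : B.IsEven) (t : ℕ) :
    ∀ m x, ∃ n, ∃ S : Finset B.Path, 2 ^ t ≤ S.card ∧ ↑S ⊆ tailClass (B := B) m n x := by
  classical
  induction t with
  | zero => exact fun m x => ⟨m, {x}, by simp, by simpa using mem_tailClass_self m m x⟩
  | succ t ih =>
    intro m x
    obtain ⟨n₁, hmn₁, y, hy, hyx⟩ := exists_ne_mem_tailClass heven m x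
    obtain ⟨n₂, Sx, hSx, hSx_sub⟩ := ih n₁ x
    obtain ⟨n₃, Sy, hSy, hSy_sub⟩ := ih n₁ y
    have hhead : head n₁ y ≠ head n₁ x := fun h => hyx (Path.ext_head_tail h hy.2)
    have hdisj : Disjoint Sx Sy := Finset.disjoint_left.mpr fun z hzx hzy =>
      hhead ((hSy_sub hzy).1.symm.trans (hSx_sub hzx).1)
    refine ⟨max (max n₁ n₂) (max n₁ n₃), Sx ∪ Sy, ?_, ?_⟩
    · rw [Finset.card_union_of_disjoint hdisj, pow_succ]
      omega
    · rw [Finset.coe_union]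
      exact Set.union_subset
        ((hSx_sub.trans (tailClass_subset_of_mem hmn₁ (mem_tailClass_self m n₁ x) n₂)).trans
          (tailClass_mono (le_max_left _ _) x))
        ((hSy_sub.trans (tailClass_subset_of_mem hmn₁ hy n₃)).trans
          (tailClass_mono (le_max_right _ _) x))

section Orbits

variable {A : Set B.Path}

theorem exists_mem_GcircN_smul_eq {m n : ℕ} (hmn : m ≤ n)
    (hdet : ∀ u v : B.Path, head m u = head m v → (u ∈ A ↔ v ∈ A)) {x z : B.Path} (hx : x ∉ A)
    (hz : z ∈ tailClass m n x) : ∃ g ∈ B.GcircN n A, g • x = z := by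
  have hxz : B.src n (x.1 n) = B.src n (z.1 n) := by rw [hz.2 n le_rfl]
  have hfix : ∀ a ∈ A, cylSwap hxz a = a := fun a ha =>
    cylSwap_apply_of_ne hxz (fun h => hx ((hdet a x (head_eq_head_of_le hmn h)).mp ha))
      fun h => hx ((hdet a x ((head_eq_head_of_le hmn h).trans hz.1)).mp ha)
  exact ⟨⟨cylSwap hxz, n, cylSwap_mem_level hxz⟩,
    mem_GcircN_iff.mpr ⟨cylSwap_mem_level hxz, hfix⟩,
    cylSwap_apply_left hxz fun i hi => (hz.2 i hi).symm⟩

theorem tendsto_ncard_orbit_GcircN (heven : B.IsEven) {m : ℕ}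
    (hdet : ∀ u v : B.Path, head m u = head m v → (u ∈ A ↔ v ∈ A)) {k : ℕ}
    {y : Fin k → B.Path} {i₀ : Fin k} (hy : y i₀ ∉ A) :
    Tendsto (fun n => (orbit (B.GcircN n A) y).ncard) atTop atTop := by
  refine tendsto_atTop_atTop_of_monotone (fun n n' h => ncard_orbit_mono (GcircN_mono A h) y)
    fun N => ?_
  obtain ⟨n, S, hS, hS_sub⟩ := exists_finset_subset_tailClass heven N m (y i₀)
  have hS_image : ↑S ⊆ (fun w => w i₀) '' orbit (B.GcircN (max m n) A) y := by
    intro z hz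
    obtain ⟨g, hg, hgz⟩ := exists_mem_GcircN_smul_eq (le_max_left m n) hdet hy
      (tailClass_mono (le_max_right m n) _ (hS_sub hz))
    exact ⟨⟨g, hg⟩ • y, mem_orbit _ _, hgz⟩
  refine ⟨max m n, ?_⟩
  calc N ≤ 2 ^ N := Nat.lt_two_pow_self.le
    _ ≤ (S : Set B.Path).ncard := by rwa [Set.ncard_coe_finset]
    _ ≤ ((fun w => w i₀) '' orbit (B.GcircN (max m n) A) y).ncard :=
      Set.ncard_le_ncard hS_image ((finite_orbit y).image _)
    _ ≤ (orbit (B.GcircN (max m n) A) y).ncard := Set.ncard_image_le (finite_orbit y)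

theorem orbit_GcircN_of_forall_mem {n k : ℕ} {y : Fin k → B.Path} (hy : ∀ i, y i ∈ A) :
    orbit (B.GcircN n A) y = {y} :=
  Set.eq_singleton_iff_unique_mem.mpr ⟨mem_orbit_self y, fun _ ⟨g, hg⟩ =>
    hg ▸ funext fun i => (mem_GcircN_iff.mp g.2).2 (y i) (hy i)⟩

theorem tendsto_inv_ncard_orbit_GcircN (heven : B.IsEven) (hA : IsClopen A) {k : ℕ}
    (y : Fin k → B.Path) :
    Tendsto (fun n => ((orbit (B.GcircN n A) y).ncard : ℝ)⁻¹) atTop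
      (𝓝 ({y : Fin k → B.Path | ∀ i, y i ∈ A}.indicator 1 y)) := by
  by_cases hy : ∀ i, y i ∈ A
  · simp [orbit_GcircN_of_forall_mem hy, Set.indicator_of_mem (show y ∈ {y | ∀ i, y i ∈ A} from hy)]
  · obtain ⟨i₀, hi₀⟩ := not_forall.mp hy
    obtain ⟨m, hdet⟩ := hA.exists_head_determines
    rw [Set.indicator_of_notMem (show y ∉ {y | ∀ i, y i ∈ A} from hy)]
    exact tendsto_inv_atTop_zero.comp
      (tendsto_natCast_atTop_atTop.comp (tendsto_ncard_orbit_GcircN heven hdet hi₀))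

end Orbits

end BratteliDiagram

theorem average_fixed_points_tendsto_Ak_general (B : BratteliDiagram)
    (heven : B.IsEven)
    (A : Set B.Path) (hA : IsClopen A)
    (k : ℕ) (μbar : Measure (Fin k → B.Path)) (hprob : IsProbabilityMeasure μbar) :
    Filter.Tendsto
      (fun n : ℕ =>
        (∑ᶠ g : ↥(B.GcircN n A),
            (μbar {y : Fin k → B.Path | (g : ↥B.fullGroup) • y = y}).toReal)
          / (Nat.card ↥(B.GcircN n A) : ℝ))
      Filter.atTop
      (nhds ((μbar {y : Fin k → B.Path | ∀ i, y i ∈ A}).toReal)) ∧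
    Antitone (fun n : ℕ =>
        (∑ᶠ g : ↥(B.GcircN n A),
            (μbar {y : Fin k → B.Path | (g : ↥B.fullGroup) • y = y}).toReal)
          / (Nat.card ↥(B.GcircN n A) : ℝ)) := by
  set φ : ℕ → (Fin k → B.Path) → ℝ := fun n y => ((orbit (B.GcircN n A) y).ncard : ℝ)⁻¹
  have hfix : ∀ n (g : B.GcircN n A), MeasurableSet (fixedBy (Fin k → B.Path) g) :=
    fun _ g => BratteliDiagram.measurableSet_fixedBy_pi g.1
  have hφ_meas : ∀ n, Measurable (φ n) := fun n => measurable_inv_ncard_orbit (hfix n)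
  have hφ_int : ∀ n, Integrable (φ n) μbar := fun n =>
    (integrable_const 1).mono' (hφ_meas n).aestronglyMeasurable
      (ae_of_all _ norm_inv_ncard_orbit_le_one)
  have havg : ∀ n : ℕ, (∑ᶠ g : ↥(B.GcircN n A),
      (μbar {y : Fin k → B.Path | (g : ↥B.fullGroup) • y = y}).toReal)
        / (Nat.card ↥(B.GcircN n A) : ℝ) = ∫ y, φ n y ∂μbar := fun n =>
    finsum_measure_fixedBy_div_card_eq_integral μbar (hfix n)
  have hAk : MeasurableSet {y : Fin k → B.Path | ∀ i, y i ∈ A} := by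
    rw [Set.ofPred_forall]
    exact .iInter fun i => measurable_pi_apply i hA.isOpen.measurableSet
  simp only [havg]
  rw [← measureReal_def, ← integral_indicator_one hAk]
  exact ⟨tendsto_integral_of_dominated_convergence (fun _ => 1)
      (fun n => (hφ_meas n).aestronglyMeasurable) (integrable_const 1)
      (fun n => ae_of_all _ norm_inv_ncard_orbit_le_one)
      (ae_of_all _ (B.tendsto_inv_ncard_orbit_GcircN heven hA)),
    fun _ _ h => integral_mono (hφ_int _) (hφ_int _) fun y =>
      antitone_inv_ncard_orbit (B.GcircN_mono A) y h⟩

/-- for a proper clopen set `A` and an invariant probability measure `μ̄` on `X^k`,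
the averages over `G°_n(A) = G_n ∩ G°(A)` of the measures of the fixed point sets converge
monotonically to `μ̄(A^k)`. -/
theorem average_fixed_points_tendsto_Ak (B : BratteliDiagram)
    (hsimple : B.IsSimple) (heven : B.IsEven)
    (A : Set B.Path) (hA : IsClopen A) (hAne : A ≠ Set.univ)
    (k : ℕ) (μbar : Measure (Fin k → B.Path)) (hprob : IsProbabilityMeasure μbar)
    (hinv : MeasInv ↥B.fullGroup μbar) :
    Filter.Tendsto
      (fun n : ℕ =>
        (∑ᶠ g : ↥(B.GcircN n A),
            (μbar {y : Fin k → B.Path | (g : ↥B.fullGroup) • y = y}).toReal)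
          / (Nat.card ↥(B.GcircN n A) : ℝ))
      Filter.atTop
      (nhds ((μbar {y : Fin k → B.Path | ∀ i, y i ∈ A}).toReal)) ∧
    Antitone (fun n : ℕ =>
        (∑ᶠ g : ↥(B.GcircN n A),
            (μbar {y : Fin k → B.Path | (g : ↥B.fullGroup) • y = y}).toReal)
          / (Nat.card ↥(B.GcircN n A) : ℝ)) :=
  average_fixed_points_tendsto_Ak_general B heven A hA k μbar hprob
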